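/- Let n ≥ 1 be an integer, p ∈ (0,1), Sp ∈ [0,1], and s_1,…,s_n ∈ [0,1]. Consider the probability model in which X_1,…,X_n are independent Bernoulli(p) random variables and, conditionally on S = X_1+⋯+X_n, the pool test outcome T ∈ {0,1} satisfies P(T = 1 | S = k) = s_k for 1 ≤ k ≤ n and P(T = 1 | S = 0) = 1-Sp. If P(T=1) > 0, then the posterior probability that a given subject is positive after a positive pool test is P(X_1 = 1 | T = 1) = p·Σ_{k=1}^n s_k·Pr(k-1;n-1,p) / [ Σ_{k=1}^n s_k·Pr(k;n,p) + (1-Sp)·(1-p)^n ]. -/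

import Mathlib

/-!
An outcome `ω` with `k` positives has weight `p^k (1-p)^(n-k)`, and there are `C(n,k)` such
outcomes, so summing any function of the number of positives against the product weight gives a
binomial sum. Fixing the first subject to be positive leaves the same computation for the other
`n - 1` subjects, with a factor `p` in front and the count shifted by one.
-/

/-- `Pr k n p = C(n,k) p^k (1-p)^(n-k)`: binomial probability. -/
noncomputable def Pr (k n : ℕ) (p : ℝ) : ℝ :=
  (n.choose k : ℝ) * p ^ k * (1 - p) ^ (n - k)

open Finset

section Bernoulli

variable {ι : Type*} [Fintype ι]

def bernoulliWeight (p : ℝ) (ω : ι → Bool) : ℝ :=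
  ∏ i, if ω i then p else 1 - p

def numPositives (ω : ι → Bool) : ℕ :=
  #{i | ω i = true}

lemma bernoulliWeight_eq_pow_mul_pow (p : ℝ) (ω : ι → Bool) :
    bernoulliWeight p ω
      = p ^ numPositives ω * (1 - p) ^ (Fintype.card ι - numPositives ω) := by
  have hcard := card_filter_add_card_filter_not (s := univ) (fun i => ω i = true)
  rw [card_univ] at hcard
  rw [bernoulliWeight, prod_ite, prod_const, prod_const, numPositives, ← hcard,
    Nat.add_sub_cancel_left]

def boolFunEquivFinset [DecidableEq ι] : (ι → Bool) ≃ Finset ι where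
  toFun ω := {i | ω i = true}
  invFun A i := decide (i ∈ A)
  left_inv ω := by ext i; simp
  right_inv A := by ext i; simp

lemma sum_bernoulliWeight_mul [DecidableEq ι] (p : ℝ) (f : ℕ → ℝ) :
    ∑ ω : ι → Bool, bernoulliWeight p ω * f (numPositives ω)
      = ∑ k ∈ range (Fintype.card ι + 1), Pr k (Fintype.card ι) p * f k := by
  rw [Fintype.sum_equiv boolFunEquivFinset _
      (fun A => p ^ #A * (1 - p) ^ (Fintype.card ι - #A) * f #A)
      (fun ω => by rw [bernoulliWeight_eq_pow_mul_pow]; rfl),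
    ← powerset_univ, sum_powerset_apply_card (fun k => p ^ k * (1 - p) ^ (Fintype.card ι - k) * f k),
    card_univ]
  simp only [Pr, nsmul_eq_mul, mul_assoc]

end Bernoulli

section FinCons

variable {m : ℕ}

lemma bernoulliWeight_cons (p : ℝ) (b : Bool) (η : Fin m → Bool) :
    bernoulliWeight p (Fin.cons b η : Fin (m + 1) → Bool)
      = (if b then p else 1 - p) * bernoulliWeight p η := by
  simp [bernoulliWeight, Fin.prod_univ_succ]

lemma numPositives_cons_true (η : Fin m → Bool) :
    numPositives (Fin.cons true η : Fin (m + 1) → Bool) = numPositives η + 1 := by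
  simp [numPositives, Fin.card_filter_univ_succ]

lemma sum_filter_apply_zero_eq_true {M : Type*} [AddCommMonoid M]
    (g : (Fin (m + 1) → Bool) → M) :
    ∑ ω ∈ univ.filter (fun ω : Fin (m + 1) → Bool => ω 0 = true), g ω
      = ∑ η : Fin m → Bool, g (Fin.cons true η) := by
  rw [sum_filter, ← (Fin.consEquiv fun _ => Bool).sum_comp, Fintype.sum_prod_type,
    Fintype.sum_bool]
  simp [Fin.consEquiv]

end FinCons

lemma sum_Icc_one_eq_sum_range {M : Type*} [AddCommMonoid M] (g : ℕ → M) (n : ℕ) :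
    ∑ k ∈ Icc 1 n, g k = ∑ k ∈ range n, g (k + 1) := by
  rw [← Ico_add_one_right_eq_Icc, sum_Ico_eq_sum_range, Nat.add_sub_cancel]
  exact sum_congr rfl fun k _ => by rw [add_comm]

/-- Model: `X_1, …, X_n` independent Bernoulli(p) on `Fin n → Bool` with product
weight `w`, `S` the number of positives, and conditionally on `S` the pool test
is positive with probability `q (S ω)`, where `q k = s k` for `k ≥ 1` and
`q 0 = 1 - Sp`.  If `P(T=1) > 0`, the posterior probability that a designated
subject is positive given a positive pool test is
`p·Σ_{k=1}^n s_k·Pr(k-1;n-1,p) / [Σ_{k=1}^n s_k·Pr(k;n,p) + (1-Sp)·(1-p)^n]`. -/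
theorem posterior_positive_given_positive_pool_test (n : ℕ) (hn : 1 ≤ n)
    (p Sp : ℝ)
    (s : ℕ → ℝ)
    (S : (Fin n → Bool) → ℕ)
    (hS : S = fun ω => (Finset.univ.filter fun i => ω i = true).card)
    (q : ℕ → ℝ) (hq : q = fun k => if k = 0 then 1 - Sp else s k)
    (w : (Fin n → Bool) → ℝ)
    (hw : w = fun ω => ∏ i, (if ω i then p else 1 - p)) :
    (∑ ω ∈ Finset.univ.filter (fun ω : Fin n → Bool => ω ⟨0, by omega⟩ = true),
        w ω * q (S ω)) /
      (∑ ω : Fin n → Bool, w ω * q (S ω))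
    = p * (∑ k ∈ Finset.Icc 1 n, s k * Pr (k - 1) (n - 1) p)
        / ((∑ k ∈ Finset.Icc 1 n, s k * Pr k n p) + (1 - Sp) * (1 - p) ^ n) := by
  obtain rfl : S = numPositives := hS
  obtain rfl : w = bernoulliWeight p := hw
  obtain ⟨m, rfl⟩ : ∃ m, n = m + 1 := ⟨n - 1, by omega⟩
  have hnum : ∑ ω ∈ univ.filter (fun ω : Fin (m + 1) → Bool => ω 0 = true),
      bernoulliWeight p ω * q (numPositives ω)
        = p * ∑ k ∈ Icc 1 (m + 1), s k * Pr (k - 1) (m + 1 - 1) p := by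
    have hq_succ (k : ℕ) : q (k + 1) = s (k + 1) := by simp [hq]
    simp only [sum_filter_apply_zero_eq_true, bernoulliWeight_cons, numPositives_cons_true,
      if_true, hq_succ, mul_assoc, ← mul_sum]
    rw [sum_bernoulliWeight_mul p (fun k => s (k + 1)), Fintype.card_fin,
      sum_Icc_one_eq_sum_range]
    simp [mul_comm]
  have hden : ∑ ω : Fin (m + 1) → Bool, bernoulliWeight p ω * q (numPositives ω)
      = ∑ k ∈ Icc 1 (m + 1), s k * Pr k (m + 1) p + (1 - Sp) * (1 - p) ^ (m + 1) := by
    rw [sum_bernoulliWeight_mul, Fintype.card_fin, sum_range_succ', sum_Icc_one_eq_sum_range]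
    simp [Pr, hq, mul_comm]
  exact congrArg₂ (· / ·) hnum hden
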